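/- Let the symmetric group S₄ act by conjugation on the 6-element set T of transpositions and on the 3-element set D of double transpositions, and in the standard way on Fin 4. Then there is an isomorphism of complex representations of S₄: (trivial 1-dimensional representation ℂ) ⊕ ℂ[T] ≅ ℂ[D] ⊕ ℂ[Fin 4], where ℂ[X] denotes the complex permutation representation associated to a finite S₄-set X (e.g. Rep.ofMulAction ℂ S₄ X). -/

import Mathlib

open CategoryTheory Limits

/-- A double transposition in `S₄`: a fixed-point-free permutation of order 2,
i.e. a product of two disjoint transpositions. -/
def IsDoubleTransposition (d : Equiv.Perm (Fin 4)) : Prop :=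
  orderOf d = 2 ∧ ∀ x, d x ≠ x

/-- The (6-element) set of transpositions in `S₄`. -/
abbrev Transpositions : Type := {t : Equiv.Perm (Fin 4) // t.IsSwap}

/-- The (3-element) set of double transpositions in `S₄`. -/
abbrev DoubleTranspositions : Type := {d : Equiv.Perm (Fin 4) // IsDoubleTransposition d}

lemma isSwap_conj {σ t : Equiv.Perm (Fin 4)} (ht : t.IsSwap) : (σ * t * σ⁻¹).IsSwap := by
  obtain ⟨x, y, hxy, rfl⟩ := ht
  exact ⟨σ x, σ y, fun h => hxy (σ.injective h), (Equiv.swap_apply_apply σ x y).symm⟩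

lemma isDoubleTransposition_conj {σ d : Equiv.Perm (Fin 4)}
    (hd : IsDoubleTransposition d) : IsDoubleTransposition (σ * d * σ⁻¹) := by
  obtain ⟨h2, hfix⟩ := hd
  constructor
  · have h : σ * d * σ⁻¹ = (MulAut.conj σ).toMonoidHom d := rfl
    rw [h, orderOf_injective (MulAut.conj σ).toMonoidHom
      (MulEquiv.injective (MulAut.conj σ)) d]
    exact h2
  · intro x h
    apply hfix (σ⁻¹ x)
    have := congrArg (⇑σ⁻¹) h
    simpa using this

/-- `S₄` acts on the set of transpositions by conjugation. -/
instance : MulAction (Equiv.Perm (Fin 4)) Transpositions where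
  smul σ t := ⟨σ * t.1 * σ⁻¹, isSwap_conj t.2⟩
  one_smul t := by
    apply Subtype.ext
    show 1 * t.1 * 1⁻¹ = t.1
    group
  mul_smul σ τ t := by
    apply Subtype.ext
    show (σ * τ) * t.1 * (σ * τ)⁻¹ = σ * (τ * t.1 * τ⁻¹) * σ⁻¹
    group

/-- `S₄` acts on the set of double transpositions by conjugation. -/
instance : MulAction (Equiv.Perm (Fin 4)) DoubleTranspositions where
  smul σ d := ⟨σ * d.1 * σ⁻¹, isDoubleTransposition_conj d.2⟩
  one_smul d := by
    apply Subtype.ext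
    show 1 * d.1 * 1⁻¹ = d.1
    group
  mul_smul σ τ d := by
    apply Subtype.ext
    show (σ * τ) * d.1 * (σ * τ)⁻¹ = σ * (τ * d.1 * τ⁻¹) * σ⁻¹
    group

/-!
All four `S₄`-sets are finite, so maps between their permutation representations are matrices
whose entries are constant on the `S₄`-orbits of pairs. Write `d_t` for the unique double
transposition commuting with a transposition `t = (a b)`. The integer map
`1 ↦ ∑ d + ∑ p`, `t ↦ d_t + a + b`, and the map
`d ↦ 2 - ∑_{t, d not commuting} t`, `p ↦ -1 + ∑_{t p ≠ p} t`, compose to `2` in both orders; this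
is a finite check. Over `ℂ`, half of the second map inverts the first.
-/

universe u

local notation "S₄" => Equiv.Perm (Fin 4)

namespace Matrix

variable {G R k X Y Z : Type*}

variable (G) in
/-- The matrices of the `G`-equivariant linear maps `k[X] → k[Y]`. -/
def IsSMulInvariant [SMul G X] [SMul G Y] (A : Matrix Y X k) : Prop :=
  ∀ (g : G) y x, A (g • y) (g • x) = A y x

theorem IsSMulInvariant.mul [Group G] [MulAction G X] [MulAction G Y] [MulAction G Z]
    [NonUnitalNonAssocSemiring k] [Fintype Y] {A : Matrix Z Y k}
    {B : Matrix Y X k} (hA : A.IsSMulInvariant G) (hB : B.IsSMulInvariant G) :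
    (A * B).IsSMulInvariant G := fun g z x =>
  (Fintype.sum_bijective (g • ·) (MulAction.bijective g) _ _ fun y => by
    dsimp only
    rw [hA, hB]).symm

theorem IsSMulInvariant.add [SMul G X] [SMul G Y] [Add k] {A B : Matrix Y X k}
    (hA : A.IsSMulInvariant G) (hB : B.IsSMulInvariant G) : (A + B).IsSMulInvariant G :=
  fun g y x => by simp only [add_apply, hA g y x, hB g y x]

theorem IsSMulInvariant.one [Group G] [MulAction G X] [Zero k] [One k] [DecidableEq X] :
    (1 : Matrix X X k).IsSMulInvariant G := fun g y x => by
  simp only [one_apply, smul_left_cancel_iff]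

theorem IsSMulInvariant.map [SMul G X] [SMul G Y] {A : Matrix Y X k} (hA : A.IsSMulInvariant G)
    {l : Type*} (f : k → l) : (A.map f).IsSMulInvariant G := fun g y x =>
  congrArg f (hA g y x)

theorem IsSMulInvariant.smul [SMul G X] [SMul G Y] [SMul R k] {A : Matrix Y X k}
    (hA : A.IsSMulInvariant G) (c : R) : (c • A).IsSMulInvariant G := fun g y x =>
  congrArg (c • ·) (hA g y x)

section Blocks

variable {X₁ X₂ Y₁ Y₂ : Type*} [SMul G X₁] [SMul G X₂] [SMul G Y₁] [SMul G Y₂]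
  {A : Matrix (Y₁ ⊕ Y₂) (X₁ ⊕ X₂) k}

theorem IsSMulInvariant.toBlocks₁₁ (hA : A.IsSMulInvariant G) : A.toBlocks₁₁.IsSMulInvariant G :=
  fun g y x => hA g (.inl y) (.inl x)

theorem IsSMulInvariant.toBlocks₁₂ (hA : A.IsSMulInvariant G) : A.toBlocks₁₂.IsSMulInvariant G :=
  fun g y x => hA g (.inl y) (.inr x)

theorem IsSMulInvariant.toBlocks₂₁ (hA : A.IsSMulInvariant G) : A.toBlocks₂₁.IsSMulInvariant G :=
  fun g y x => hA g (.inr y) (.inl x)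

theorem IsSMulInvariant.toBlocks₂₂ (hA : A.IsSMulInvariant G) : A.toBlocks₂₂.IsSMulInvariant G :=
  fun g y x => hA g (.inr y) (.inr x)

end Blocks

theorem inv_natCast_smul_map_mul_map {K m n : Type*} [Field K] [Fintype n] [DecidableEq m]
    {A : Matrix n m ℤ} {B : Matrix m n ℤ} {N : ℕ} (h : B * A = N) (hN : (N : K) ≠ 0) :
    (N : K)⁻¹ • (B.map (Int.castRingHom K) * A.map (Int.castRingHom K)) = 1 := by
  rw [← Matrix.map_mul, h, Matrix.map_natCast (map_zero _), ← Matrix.diagonal_smul]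
  simp only [map_natCast, Pi.smul_def, smul_eq_mul, inv_mul_cancel₀ hN, Matrix.diagonal_one]

end Matrix

namespace Rep

variable {k G : Type*} {X Y Z : Type u} [CommRing k] [Group G]
  [MulAction G X] [MulAction G Y] [MulAction G Z] [Fintype X] [Fintype Y] [Fintype Z]

lemma toLin_comp_ofMulAction [DecidableEq X] {A : Matrix Y X k} (hA : A.IsSMulInvariant G)
    (g : G) :
    A.toLin (MonoidAlgebra.basis X k) (MonoidAlgebra.basis Y k) ∘ₗ
        Representation.ofMulAction k G X g =
      Representation.ofMulAction k G Y g ∘ₗ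
        A.toLin (MonoidAlgebra.basis X k) (MonoidAlgebra.basis Y k) := by
  refine (MonoidAlgebra.basis X k).ext fun x => ?_
  simp only [LinearMap.comp_apply, MonoidAlgebra.basis_apply, Representation.ofMulAction_single]
  rw [← MonoidAlgebra.basis_apply, ← MonoidAlgebra.basis_apply, Matrix.toLin_self,
    Matrix.toLin_self, map_sum]
  refine (Fintype.sum_bijective (g • ·) (MulAction.bijective g) _ _ fun y => ?_).symm
  simp [hA g y x]

variable (k) in
noncomputable def ofMatrix [DecidableEq X] (A : Matrix Y X k) (hA : A.IsSMulInvariant G) :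
    ofMulAction k G X ⟶ ofMulAction k G Y :=
  ofHom ⟨A.toLin (MonoidAlgebra.basis X k) (MonoidAlgebra.basis Y k), toLin_comp_ofMulAction hA⟩

lemma ofMatrix_comp [DecidableEq X] [DecidableEq Y] {A : Matrix Y X k} {B : Matrix Z Y k}
    (hA : A.IsSMulInvariant G) (hB : B.IsSMulInvariant G) :
    ofMatrix k A hA ≫ ofMatrix k B hB = ofMatrix k (B * A) (hB.mul hA) := by
  ext1; ext1
  exact (Matrix.toLin_mul _ _ _ B A).symm

lemma ofMatrix_add [DecidableEq X] {A B : Matrix Y X k}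
    (hA : A.IsSMulInvariant G) (hB : B.IsSMulInvariant G) :
    ofMatrix k A hA + ofMatrix k B hB = ofMatrix k (A + B) (hA.add hB) := by
  ext1; ext1
  exact (map_add (Matrix.toLin (MonoidAlgebra.basis X k) (MonoidAlgebra.basis Y k)) A B).symm

lemma ofMatrix_one [DecidableEq X] :
    ofMatrix k (1 : Matrix X X k) .one = 𝟙 (ofMulAction k G X) := by
  ext1; ext1
  exact Matrix.toLin_one _

lemma ofMatrix_zero [DecidableEq X] :
    ofMatrix k (0 : Matrix Y X k) (fun _ _ _ => rfl) =
      (0 : ofMulAction k G X ⟶ ofMulAction k G Y) := by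
  ext1; ext1
  exact map_zero (Matrix.toLin (MonoidAlgebra.basis X k) (MonoidAlgebra.basis Y k))

section Blocks

variable {X₁ X₂ Y₁ Y₂ Z₁ Z₂ : Type u} [MulAction G X₁] [MulAction G X₂] [MulAction G Y₁]
  [MulAction G Y₂] [MulAction G Z₁] [MulAction G Z₂] [Fintype X₁] [Fintype X₂] [Fintype Y₁]
  [Fintype Y₂] [Fintype Z₁] [Fintype Z₂] [DecidableEq X₁] [DecidableEq X₂]

variable (k) in
noncomputable def ofBlockMatrix (A : Matrix (Y₁ ⊕ Y₂) (X₁ ⊕ X₂) k) (hA : A.IsSMulInvariant G) :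
    ofMulAction k G X₁ ⊞ ofMulAction k G X₂ ⟶ ofMulAction k G Y₁ ⊞ ofMulAction k G Y₂ :=
  Biprod.ofComponents (ofMatrix k A.toBlocks₁₁ hA.toBlocks₁₁)
    (ofMatrix k A.toBlocks₂₁ hA.toBlocks₂₁) (ofMatrix k A.toBlocks₁₂ hA.toBlocks₁₂)
    (ofMatrix k A.toBlocks₂₂ hA.toBlocks₂₂)

lemma ofBlockMatrix_comp [DecidableEq Y₁] [DecidableEq Y₂] {A : Matrix (Y₁ ⊕ Y₂) (X₁ ⊕ X₂) k}
    {B : Matrix (Z₁ ⊕ Z₂) (Y₁ ⊕ Y₂) k} (hA : A.IsSMulInvariant G) (hB : B.IsSMulInvariant G) :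
    ofBlockMatrix k A hA ≫ ofBlockMatrix k B hB = ofBlockMatrix k (B * A) (hB.mul hA) := by
  simp only [ofBlockMatrix, Biprod.ofComponents_comp, ofMatrix_comp, ofMatrix_add]
  congr 2 <;> ext <;>
    simp [Matrix.mul_apply, Fintype.sum_sum_type, Matrix.toBlocks₁₁, Matrix.toBlocks₁₂,
      Matrix.toBlocks₂₁, Matrix.toBlocks₂₂]

lemma ofBlockMatrix_one :
    ofBlockMatrix k (1 : Matrix (X₁ ⊕ X₂) (X₁ ⊕ X₂) k) .one =
      𝟙 (ofMulAction k G X₁ ⊞ ofMulAction k G X₂) := by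
  have h₁₁ : (1 : Matrix (X₁ ⊕ X₂) (X₁ ⊕ X₂) k).toBlocks₁₁ = 1 := Matrix.toBlocks₁₁_diagonal _
  have h₁₂ : (1 : Matrix (X₁ ⊕ X₂) (X₁ ⊕ X₂) k).toBlocks₁₂ = 0 := Matrix.toBlocks₁₂_diagonal _
  have h₂₁ : (1 : Matrix (X₁ ⊕ X₂) (X₁ ⊕ X₂) k).toBlocks₂₁ = 0 := Matrix.toBlocks₂₁_diagonal _
  have h₂₂ : (1 : Matrix (X₁ ⊕ X₂) (X₁ ⊕ X₂) k).toBlocks₂₂ = 1 := Matrix.toBlocks₂₂_diagonal _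
  simp only [ofBlockMatrix, h₁₁, h₁₂, h₂₁, h₂₂, ofMatrix_one, ofMatrix_zero]
  apply biprod.hom_ext' <;> simp

variable (k) in
noncomputable def ofBlockMatrixIso [DecidableEq Y₁] [DecidableEq Y₂]
    (A : Matrix (Y₁ ⊕ Y₂) (X₁ ⊕ X₂) k) (B : Matrix (X₁ ⊕ X₂) (Y₁ ⊕ Y₂) k)
    (hA : A.IsSMulInvariant G) (hB : B.IsSMulInvariant G) (hBA : B * A = 1) (hAB : A * B = 1) :
    ofMulAction k G X₁ ⊞ ofMulAction k G X₂ ≅ ofMulAction k G Y₁ ⊞ ofMulAction k G Y₂ where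
  hom := ofBlockMatrix k A hA
  inv := ofBlockMatrix k B hB
  hom_inv_id := by simp only [ofBlockMatrix_comp, hBA, ofBlockMatrix_one]
  inv_hom_id := by simp only [ofBlockMatrix_comp, hAB, ofBlockMatrix_one]

end Blocks

end Rep

namespace Recillas

open Equiv

instance : Fintype Transpositions :=
  Fintype.subtype {swap 0 1, swap 0 2, swap 0 3, swap 1 2, swap 1 3, swap 2 3} <| by
    intro t
    constructor
    · intro ht
      simp only [Finset.mem_insert, Finset.mem_singleton] at ht
      rcases ht with rfl | rfl | rfl | rfl | rfl | rfl <;> exact ⟨_, _, by decide, rfl⟩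
    · rintro ⟨x, y, hxy, rfl⟩
      revert x y
      decide

lemma isDoubleTransposition_iff (d : S₄) :
    IsDoubleTransposition d ↔ d * d = 1 ∧ ∀ x, d x ≠ x := by
  refine and_congr_left fun hfix => ⟨fun h => ?_, fun h => orderOf_eq_prime ?_ ?_⟩
  · rw [← sq, ← h, pow_orderOf_eq_one]
  · rwa [sq]
  · rintro rfl
    exact hfix 0 rfl

instance : Fintype DoubleTranspositions :=
  Fintype.subtype {swap 0 1 * swap 2 3, swap 0 2 * swap 1 3, swap 0 3 * swap 1 2} <| by
    intro d
    rw [isDoubleTransposition_iff]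
    revert d
    decide

def matrix : Matrix (DoubleTranspositions ⊕ Fin 4) (PUnit ⊕ Transpositions) ℤ :=
  Matrix.fromBlocks (.of fun _ _ => 1) (.of fun d t => if t.1 * d.1 = d.1 * t.1 then 1 else 0)
    (.of fun _ _ => 1) (.of fun p t => if t.1 p = p then 0 else 1)

def matrix' : Matrix (PUnit ⊕ Transpositions) (DoubleTranspositions ⊕ Fin 4) ℤ :=
  Matrix.fromBlocks (.of fun _ _ => 2) (.of fun _ _ => -1)
    (.of fun t d => if t.1 * d.1 = d.1 * t.1 then 0 else -1)
    (.of fun t p => if t.1 p = p then 0 else 1)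

lemma commute_smul_iff (g : S₄) (t : Transpositions) (d : DoubleTranspositions) :
    (g • t).1 * (g • d).1 = (g • d).1 * (g • t).1 ↔ t.1 * d.1 = d.1 * t.1 :=
  Commute.conj_iff g

lemma smul_apply_smul_eq_iff (g : S₄) (t : Transpositions) (p : Fin 4) :
    (g • t).1 (g p) = g p ↔ t.1 p = p := by
  change (g * t.1 * g⁻¹) (g p) = g p ↔ _
  simp

lemma matrix_isSMulInvariant : matrix.IsSMulInvariant S₄ := by
  rintro g (d | p) (u | t) <;> simp [matrix, commute_smul_iff, smul_apply_smul_eq_iff]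

lemma matrix'_isSMulInvariant : matrix'.IsSMulInvariant S₄ := by
  rintro g (u | t) (d | p) <;> simp [matrix', commute_smul_iff, smul_apply_smul_eq_iff]

lemma matrix'_mul_matrix : matrix' * matrix = 2 := by decide

lemma matrix_mul_matrix' : matrix * matrix' = 2 := by decide

end Recillas

/-- The Recillas identity of complex representations of `S₄`:
`ℂ ⊕ ℂ[T] ≅ ℂ[D] ⊕ ℂ[Fin 4]`, where `T` is the set of transpositions and `D` the set of
double transpositions, both with the conjugation action, and `Fin 4` carries the standard
action. -/
theorem recillas_representation_iso :
    Nonempty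
      (Rep.trivial ℂ (Equiv.Perm (Fin 4)) ℂ ⊞
          Rep.ofMulAction ℂ (Equiv.Perm (Fin 4)) Transpositions ≅
        Rep.ofMulAction ℂ (Equiv.Perm (Fin 4)) DoubleTranspositions ⊞
          Rep.ofMulAction ℂ (Equiv.Perm (Fin 4)) (Fin 4)) := by
  have hN : ((2 : ℕ) : ℂ) ≠ 0 := two_ne_zero
  refine ⟨biprod.mapIso (Rep.ofMulActionSubsingletonIsoTrivial ℂ S₄ PUnit).symm (Iso.refl _) ≪≫
    Rep.ofBlockMatrixIso ℂ (Recillas.matrix.map (Int.castRingHom ℂ))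
      (((2 : ℕ) : ℂ)⁻¹ • Recillas.matrix'.map (Int.castRingHom ℂ))
      (Recillas.matrix_isSMulInvariant.map _) ((Recillas.matrix'_isSMulInvariant.map _).smul _)
      ?_ ?_⟩
  · rw [Matrix.smul_mul]
    exact Matrix.inv_natCast_smul_map_mul_map Recillas.matrix'_mul_matrix hN
  · rw [Matrix.mul_smul]
    exact Matrix.inv_natCast_smul_map_mul_map Recillas.matrix_mul_matrix' hN
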